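/- For every threshold A > 0, the average run length to false alarm of the Shiryaev–Roberts procedure satisfies E_∞[S_A] ≥ A, where S_A = inf{n ≥ 1 : R_n ≥ A} (with S_A = +∞ if R_n never reaches A). -/

import Mathlib

/-  Common framework: the iid change-point model.

`(X, 𝒳, μ)` is a σ-finite measure space; `f` and `g` are probability densities
w.r.t. `μ`, mutually absolutely continuous and not `μ`-a.e. equal.  For
`ν ∈ ℕ ∪ {∞}` (coded as `ν : ℕ∞`), `P ν` is the product probability measure on
the sequence space `ℕ → X` (coordinate `n` is the observation `X_{n+1}`) under
which the first `ν` observations are iid with density `f` and the rest are iid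
with density `g`; it is characterized by its finite-dimensional distributions.
`P ⊤` is the no-change measure `P_∞`, and `P 0` makes all observations iid
with density `g`. -/

open MeasureTheory Filter Set ENNReal

noncomputable section

variable {X : Type*} [MeasurableSpace X]

/-- Likelihood ratio `g/f` of a single observation. -/
def lrv (f g : X → ℝ≥0∞) (x : X) : ℝ := (g x / f x).toReal

/-- The natural filtration `F_n = σ(X_1, …, X_n)` on the sequence space. -/
def natFilt (X : Type*) [MeasurableSpace X] (n : ℕ) : MeasurableSpace (ℕ → X) :=
  MeasurableSpace.comap (fun ω (i : Fin n) => ω i) inferInstance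

/-- Basic assumptions on the iid change-point model. -/
structure IsCpModel (μ : Measure X) (f g : X → ℝ≥0∞) : Prop where
  sigmaFinite : SigmaFinite μ
  meas_f : Measurable f
  meas_g : Measurable g
  prob_f : ∫⁻ x, f x ∂μ = 1
  prob_g : ∫⁻ x, g x ∂μ = 1
  mutual_ac : ∀ᵐ x ∂μ, (f x ≠ 0 ↔ g x ≠ 0)
  ne : ¬ f =ᵐ[μ] g

/-- `P : ℕ∞ → Measure (ℕ → X)` is the family of change-point measures `P_ν`:
each `P ν` is a probability measure whose finite-dimensional distributions are
products, coordinate `i` having density `f` if `i < ν` (i.e. observation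
`X_{i+1}` with `i + 1 ≤ ν` is pre-change) and density `g` otherwise. -/
def IsChangePointFamily (μ : Measure X) (f g : X → ℝ≥0∞)
    (P : ℕ∞ → Measure (ℕ → X)) : Prop :=
  (∀ ν, IsProbabilityMeasure (P ν)) ∧
    ∀ (ν : ℕ∞) (n : ℕ),
      (P ν).map (fun ω (i : Fin n) => ω i) =
        Measure.pi (fun i : Fin n =>
          if (i : ℕ∞) < ν then μ.withDensity f else μ.withDensity g)

/-- A detection procedure: a stopping time `T ≥ 1` of the natural filtration,
with values in `ℕ∞` (`T = ⊤` meaning no alarm is ever raised). -/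
def IsDetectionProcedure (T : (ℕ → X) → ℕ∞) : Prop :=
  (∀ ω, 1 ≤ T ω) ∧ ∀ n : ℕ, MeasurableSet[natFilt X n] {ω | T ω ≤ (n : ℕ∞)}

variable (P : ℕ∞ → Measure (ℕ → X))

/-- The average run length to false alarm, `ARL(T) = E_∞[T]`. -/
def ARL (T : (ℕ → X) → ℕ∞) : ℝ≥0∞ := ∫⁻ ω, (T ω : ℝ≥0∞) ∂(P ⊤)

/-- `E_k[(T-k)^+]` (in `ℕ∞`, truncated subtraction is exactly `(T-k)^+`). -/
def EDelay (T : (ℕ → X) → ℕ∞) (k : ℕ) : ℝ≥0∞ :=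
  ∫⁻ ω, ((T ω - (k : ℕ∞) : ℕ∞) : ℝ≥0∞) ∂(P k)

/-- `P_ν(T > ν)`. -/
def PSurv (T : (ℕ → X) → ℕ∞) (ν : ℕ) : ℝ≥0∞ := P ν {ω | (ν : ℕ∞) < T ω}

/-- Pollak's worst-case expected detection delay
`SADD(T) = sup_ν E_ν[(T-ν)^+] / P_ν(T > ν)`. -/
def SADD (T : (ℕ → X) → ℕ∞) : ℝ≥0∞ := ⨆ ν : ℕ, EDelay P T ν / PSurv P T ν

/-- The relative integral average detection delay
`RIADD(T) = (Σ_k E_k[(T-k)^+]) / E_∞[T]`. -/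
def RIADD (T : (ℕ → X) → ℕ∞) : ℝ≥0∞ := (∑' k : ℕ, EDelay P T k) / ARL P T

/-- The class `Δ(γ)` of detection procedures with `E_∞[T] ≥ γ`. -/
def DeltaClass (γ : ℝ) : Set ((ℕ → X) → ℕ∞) :=
  {T | IsDetectionProcedure T ∧ ENNReal.ofReal γ ≤ ARL P T}

variable {P}

/-- The Shiryaev–Roberts–`r` statistic: `R_0^r = r`,
`R_n^r = (1 + R_{n-1}^r)·LR_n` (`r = 0` gives the SR statistic). -/
def SRstat (f g : X → ℝ≥0∞) (r : ℝ) : ℕ → (ℕ → X) → ℝ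
  | 0 => fun _ => r
  | n + 1 => fun ω => (1 + SRstat f g r n ω) * lrv f g (ω n)

/-- The stopping time `inf {n ≥ 1 : R_n ≥ A}` (`= ⊤` if `R_n` never reaches `A`). -/
def hitTime (R : ℕ → (ℕ → X) → ℝ) (A : ℝ) (ω : ℕ → X) : ℕ∞ :=
  sInf ((fun m : ℕ => (m : ℕ∞)) '' {m : ℕ | 1 ≤ m ∧ A ≤ R m ω})


/-! ### Auxiliary lemmas for Statement 4 -/

section SRAux

variable {X : Type*} [MeasurableSpace X]

lemma SRstat_nonneg (f g : X → ℝ≥0∞) (n : ℕ) (ω : ℕ → X) : 0 ≤ SRstat f g 0 n ω := by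
  induction n with
  | zero => exact le_refl 0
  | succ n ih =>
      exact mul_nonneg (by linarith) ENNReal.toReal_nonneg

lemma measurable_SRstat {f g : X → ℝ≥0∞} (hf : Measurable f) (hg : Measurable g)
    (r : ℝ) (n : ℕ) : Measurable (SRstat f g r n) := by
  induction n with
  | zero => exact measurable_const
  | succ n ih =>
      have hl : Measurable fun ω : ℕ → X => lrv f g (ω n) :=
        ENNReal.measurable_toReal.comp
          ((hg.comp (measurable_pi_apply n)).div (hf.comp (measurable_pi_apply n)))
      exact (measurable_const.add ih).mul hl

lemma SRstat_congr (f g : X → ℝ≥0∞) (r : ℝ) :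
    ∀ (n : ℕ) (ω ω' : ℕ → X), (∀ i < n, ω i = ω' i) →
      SRstat f g r n ω = SRstat f g r n ω'
  | 0, _, _, _ => rfl
  | n+1, ω, ω', h => by
      simp only [SRstat]
      rw [SRstat_congr f g r n ω ω' (fun i hi => h i (Nat.lt_succ_of_lt hi)),
        h n (Nat.lt_succ_self n)]

lemma hitTime_le_iff {R : ℕ → (ℕ → X) → ℝ} {A : ℝ} {ω : ℕ → X} {n : ℕ} :
    hitTime R A ω ≤ (n : ℕ∞) ↔ ∃ m, 1 ≤ m ∧ m ≤ n ∧ A ≤ R m ω := by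
  constructor
  · intro h
    by_contra hc
    push_neg at hc
    have hge : ((n + 1 : ℕ) : ℕ∞) ≤ hitTime R A ω := by
      apply le_sInf
      rintro b ⟨m, ⟨hm1, hm2⟩, rfl⟩
      have hnm : n < m := by
        by_contra hmn
        push_neg at hmn
        exact absurd hm2 (not_le.mpr (hc m hm1 hmn))
      show ((n + 1 : ℕ) : ℕ∞) ≤ (m : ℕ∞)
      exact_mod_cast hnm
    have : ((n + 1 : ℕ) : ℕ∞) ≤ (n : ℕ∞) := hge.trans h
    exact absurd this (by exact_mod_cast Nat.not_succ_le_self n)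
  · rintro ⟨m, h1, h2, h3⟩
    exact le_trans (sInf_le ⟨m, ⟨h1, h3⟩, rfl⟩)
      (show (m : ℕ∞) ≤ (n : ℕ∞) by exact_mod_cast h2)

lemma hitTime_spec {R : ℕ → (ℕ → X) → ℝ} {A : ℝ} {ω : ℕ → X} {n : ℕ}
    (h : hitTime R A ω ≤ (n : ℕ∞)) :
    1 ≤ (hitTime R A ω).toNat ∧ A ≤ R (hitTime R A ω).toNat ω := by
  obtain ⟨m, hm1, hm2, hm3⟩ := hitTime_le_iff.mp h
  set N := {m : ℕ | 1 ≤ m ∧ A ≤ R m ω} with hN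
  have hNne : N.Nonempty := ⟨m, hm1, hm3⟩
  have heq : hitTime R A ω = ((sInf N : ℕ) : ℕ∞) := by
    apply le_antisymm
    · exact sInf_le ⟨sInf N, Nat.sInf_mem hNne, rfl⟩
    · apply le_sInf
      rintro b ⟨k, hk, rfl⟩
      show ((sInf N : ℕ) : ℕ∞) ≤ (k : ℕ∞)
      exact_mod_cast Nat.sInf_le hk
  have hmem := Nat.sInf_mem hNne
  rw [heq]
  simp only [ENat.toNat_coe]
  exact hmem

/-- key independence step: multiplying a function of the first `n` coordinates by the
likelihood ratio of coordinate `n` does not change the `P_∞`-expectation. -/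
lemma lr_step {μ : Measure X} {f g : X → ℝ≥0∞} (hmodel : IsCpModel μ f g)
    {Q : Measure (ℕ → X)} [IsProbabilityMeasure Q]
    (hfin : ∀ n : ℕ, Q.map (fun ω (i : Fin n) => ω i) =
      Measure.pi (fun _ : Fin n => μ.withDensity f))
    (n : ℕ) (H : (Fin n → X) → ℝ≥0∞) (hH : Measurable H) :
    ∫⁻ ω, H (fun i : Fin n => ω i) * (g (ω n) / f (ω n)) ∂Q
      = ∫⁻ ω, H (fun i : Fin n => ω i) ∂Q := by
  haveI := hmodel.sigmaFinite
  haveI hprobν : IsProbabilityMeasure (μ.withDensity f) := by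
    constructor
    rw [withDensity_apply _ MeasurableSet.univ, Measure.restrict_univ]
    exact hmodel.prob_f
  have hproj : ∀ m : ℕ, Measurable (fun ω : ℕ → X => fun i : Fin m => ω i) :=
    fun m => measurable_pi_lambda _ fun i => measurable_pi_apply _
  -- mean one of the likelihood ratio
  have hmean : ∫⁻ x, g x / f x ∂(μ.withDensity f) = 1 := by
    rw [show ∫⁻ x, g x / f x ∂(μ.withDensity f) = ∫⁻ x, (f * fun x => g x / f x) x ∂μ from
      lintegral_withDensity_eq_lintegral_mul μ hmodel.meas_f
      (hmodel.meas_g.div hmodel.meas_f)]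
    have hft : ∀ᵐ x ∂μ, f x ≠ ⊤ :=
      (ae_lt_top hmodel.meas_f (by rw [hmodel.prob_f]; exact ENNReal.one_ne_top)).mono
        fun x h => h.ne
    have hae : (fun x => (f * fun x => g x / f x) x) =ᵐ[μ] g := by
      filter_upwards [hft, hmodel.mutual_ac] with x hx hiff
      simp only [Pi.mul_apply]
      by_cases h0 : f x = 0
      · have hg0 : g x = 0 := by
          by_contra hg
          exact (hiff.mpr hg) h0
        simp [h0, hg0]
      · rw [div_eq_mul_inv, ← mul_assoc, mul_comm (f x) (g x), mul_assoc,
          ENNReal.mul_inv_cancel h0 hx, mul_one]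
    rw [lintegral_congr_ae hae, hmodel.prob_g]
  -- rewrite RHS through the finite-dimensional distribution
  have hR : ∫⁻ ω, H (fun i : Fin n => ω i) ∂Q
      = ∫⁻ y, H y ∂(Measure.pi fun _ : Fin n => μ.withDensity f) := by
    rw [← hfin n, lintegral_map hH (hproj n)]

  -- rewrite LHS through the finite-dimensional distribution on n+1 coordinates
  set F : (Fin (n+1) → X) → ℝ≥0∞ :=
    fun x => H (Fin.init x) * (g (x (Fin.last n)) / f (x (Fin.last n))) with hFdef
  have hFmeas : Measurable F := by
    apply Measurable.mul
    · exact hH.comp (measurable_pi_lambda _ fun i => measurable_pi_apply _)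
    · exact (hmodel.meas_g.comp (measurable_pi_apply _)).div
        (hmodel.meas_f.comp (measurable_pi_apply _))
  have hcomp : (fun ω : ℕ → X => H (fun i : Fin n => ω i) * (g (ω n) / f (ω n)))
      = fun ω => F (fun i : Fin (n+1) => ω i) := by
    funext ω
    have h1 : Fin.init (fun i : Fin (n + 1) => ω (i : ℕ)) = fun i : Fin n => ω (i : ℕ) := by
      funext j
      simp [Fin.init]
    simp only [hFdef, h1, Fin.val_last]
  have hL : ∫⁻ ω, H (fun i : Fin n => ω i) * (g (ω n) / f (ω n)) ∂Q
      = ∫⁻ x, F x ∂(Measure.pi fun _ : Fin (n+1) => μ.withDensity f) := by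
    rw [hcomp, ← lintegral_map hFmeas (hproj (n+1)), hfin (n+1)]
  set e := MeasurableEquiv.piFinSuccAbove (fun _ : Fin (n+1) => X) (Fin.last n) with he
  have hmp := measurePreserving_piFinSuccAbove
    (fun _ : Fin (n+1) => μ.withDensity f) (Fin.last n)
  have hGmeas : Measurable fun z : X × (Fin n → X) => F (e.symm z) :=
    hFmeas.comp e.symm.measurable
  have hsplit : ∫⁻ x, F x ∂(Measure.pi fun _ : Fin (n+1) => μ.withDensity f)
      = ∫⁻ z, F (e.symm z)
          ∂((μ.withDensity f).prod (Measure.pi fun _ : Fin n => μ.withDensity f)) := by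
    rw [← hmp.lintegral_comp hGmeas]
    refine lintegral_congr fun x => ?_
    rw [MeasurableEquiv.symm_apply_apply]
  have hFsymm : ∀ z : X × (Fin n → X), F (e.symm z) = (g z.1 / f z.1) * H z.2 := by
    rintro ⟨a, b⟩
    have h1 : e.symm (a, b) = Fin.insertNth (Fin.last n) a b := rfl
    rw [h1]
    simp only [hFdef, Fin.insertNth_last']
    rw [Fin.init_snoc, Fin.snoc_last, mul_comm]
  rw [hL, hR, hsplit]
  calc ∫⁻ z, F (e.symm z)
        ∂((μ.withDensity f).prod (Measure.pi fun _ : Fin n => μ.withDensity f))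
      = ∫⁻ z : X × (Fin n → X), (g z.1 / f z.1) * H z.2
          ∂((μ.withDensity f).prod (Measure.pi fun _ : Fin n => μ.withDensity f)) := by
        exact lintegral_congr fun z => hFsymm z
    _ = (∫⁻ a, g a / f a ∂(μ.withDensity f))
          * ∫⁻ y, H y ∂(Measure.pi fun _ : Fin n => μ.withDensity f) := by
        exact lintegral_prod_mul
          ((hmodel.meas_g.div hmodel.meas_f).aemeasurable) hH.aemeasurable
    _ = ∫⁻ y, H y ∂(Measure.pi fun _ : Fin n => μ.withDensity f) := by
        rw [hmean, one_mul]

end SRAux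

/-!
STATEMENT 4.  For every threshold `A > 0`, the average run length to false
alarm of the Shiryaev–Roberts procedure `S_A = inf {n ≥ 1 : R_n ≥ A}`
satisfies `E_∞[S_A] ≥ A`.
-/
theorem SR_ARL_ge_threshold
    (μ : Measure X) (f g : X → ℝ≥0∞) (hmodel : IsCpModel μ f g)
    (P : ℕ∞ → Measure (ℕ → X)) (hP : IsChangePointFamily μ f g P)
    (A : ℝ) (hA : 0 < A) :
    ENNReal.ofReal A ≤ ARL P (hitTime (SRstat f g 0) A) := by
  classical
  obtain ⟨hPprob, hPfin⟩ := hP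
  haveI := hPprob ⊤
  haveI := hmodel.sigmaFinite
  haveI hprobν : IsProbabilityMeasure (μ.withDensity f) := by
    constructor
    rw [withDensity_apply _ MeasurableSet.univ, Measure.restrict_univ]
    exact hmodel.prob_f
  set Q : Measure (ℕ → X) := P ⊤ with hQdef
  have hfin : ∀ n : ℕ, Q.map (fun ω (i : Fin n) => ω i) =
      Measure.pi (fun _ : Fin n => μ.withDensity f) := by
    intro n
    have h := hPfin ⊤ n
    have : (fun i : Fin n =>
        if ((i : ℕ) : ℕ∞) < ⊤ then μ.withDensity f else μ.withDensity g)
        = fun _ : Fin n => μ.withDensity f := by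
      funext i
      rw [if_pos]
      exact lt_of_le_of_ne le_top (ENat.coe_ne_top _)
    rw [← this]
    exact h
  have hproj : ∀ m : ℕ, Measurable (fun ω : ℕ → X => fun i : Fin m => ω i) :=
    fun m => measurable_pi_lambda _ fun i => measurable_pi_apply _
  -- X is nonempty
  have hXne : Nonempty X := by
    by_contra hno
    rw [not_nonempty_iff] at hno
    haveI : IsEmpty (ℕ → X) := ⟨fun ω => hno.false (ω 0)⟩
    have h1 : Q Set.univ = 1 := measure_univ
    rw [Set.univ_eq_empty_iff.mpr inferInstance, measure_empty] at h1
    exact zero_ne_one h1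
  obtain ⟨x0⟩ := hXne
  set R : ℕ → (ℕ → X) → ℝ := SRstat f g 0 with hRdef
  set S : (ℕ → X) → ℕ∞ := hitTime R A with hSdef
  have hRmeas : ∀ m, Measurable (R m) := measurable_SRstat hmodel.meas_f hmodel.meas_g 0
  -- measurability of the level sets of S
  have hSleSet : ∀ n : ℕ, {ω | S ω ≤ (n : ℕ∞)}
      = ⋃ m : ℕ, ⋃ (_ : 1 ≤ m ∧ m ≤ n), {ω | A ≤ R m ω} := by
    intro n
    ext ω
    simp only [Set.mem_setOf_eq, Set.mem_iUnion]
    rw [show S = hitTime R A from rfl, hitTime_le_iff]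
    constructor
    · rintro ⟨m, h1, h2, h3⟩; exact ⟨m, ⟨h1, h2⟩, h3⟩
    · rintro ⟨m, ⟨h1, h2⟩, h3⟩; exact ⟨m, h1, h2, h3⟩
  have hSle : ∀ n : ℕ, MeasurableSet {ω | S ω ≤ (n : ℕ∞)} := by
    intro n
    rw [hSleSet n]
    exact MeasurableSet.iUnion fun m => MeasurableSet.iUnion fun _ =>
      (hRmeas m) measurableSet_Ici
  have hSgt : ∀ n : ℕ, MeasurableSet {ω | (n : ℕ∞) < S ω} := by
    intro n
    have : {ω | (n : ℕ∞) < S ω} = {ω | S ω ≤ (n : ℕ∞)}ᶜ := by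
      ext ω; simp [not_le]
    rw [this]
    exact (hSle n).compl
  have hStop : MeasurableSet {ω | S ω = ⊤} := by
    have : {ω | S ω = ⊤} = ⋂ n : ℕ, {ω | (n : ℕ∞) < S ω} := by
      ext ω
      simp only [Set.mem_setOf_eq, Set.mem_iInter]
      constructor
      · intro h n; rw [h]; exact lt_of_le_of_ne le_top (ENat.coe_ne_top _)
      · intro h
        by_contra hne
        obtain ⟨k, hk⟩ := WithTop.ne_top_iff_exists.mp hne
        exact absurd (hk ▸ h k) (lt_irrefl _)
    rw [this]
    exact MeasurableSet.iInter fun n => hSgt n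
  -- S and R depend only on finitely many coordinates
  have hRcongr : ∀ (m : ℕ) (ω ω' : ℕ → X), (∀ i < m, ω i = ω' i) →
      R m ω = R m ω' := fun m ω ω' h => SRstat_congr f g 0 m ω ω' h
  have hScongr : ∀ (n : ℕ) (ω ω' : ℕ → X), (∀ i < n, ω i = ω' i) →
      ((n : ℕ∞) < S ω ↔ (n : ℕ∞) < S ω') := by
    intro n ω ω' hagree
    rw [show S = hitTime R A from rfl, ← not_le, ← not_le, not_iff_not,
      hitTime_le_iff, hitTime_le_iff]
    constructor
    · rintro ⟨m, h1, h2, h3⟩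
      exact ⟨m, h1, h2, by
        rw [← hRcongr m ω ω' fun i hi => hagree i (lt_of_lt_of_le hi h2)]
        exact h3⟩
    · rintro ⟨m, h1, h2, h3⟩
      exact ⟨m, h1, h2, by
        rw [hRcongr m ω ω' fun i hi => hagree i (lt_of_lt_of_le hi h2)]
        exact h3⟩
  -- the extension map
  set ext : ∀ n : ℕ, (Fin n → X) → (ℕ → X) :=
    fun n y i => if h : i < n then y ⟨i, h⟩ else x0 with hextdef
  have hext_meas : ∀ n, Measurable (ext n) := by
    intro n
    apply measurable_pi_lambda
    intro i
    by_cases h : i < n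
    · simpa [hextdef, h] using measurable_pi_apply (⟨i, h⟩ : Fin n)
    · simpa [hextdef, h] using measurable_const
  have hext_agree : ∀ (n : ℕ) (ω : ℕ → X) (i : ℕ), i < n →
      ext n (fun j : Fin n => ω j) i = ω i := by
    intro n ω i hi
    simp [hextdef, hi]
  -- stopped index
  set τ : ℕ → (ℕ → X) → ℕ := fun n ω => (min (n : ℕ∞) (S ω)).toNat with hτdef
  have hτ_le : ∀ (n : ℕ) (ω : ℕ → X), τ n ω ≤ n := by
    intro n ω
    have h1 : min (n : ℕ∞) (S ω) ≤ (n : ℕ∞) := min_le_left _ _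
    have h2 := ENat.toNat_le_toNat h1 (ENat.coe_ne_top n)
    rw [ENat.toNat_coe] at h2
    exact h2
  have hτ_gt : ∀ (n : ℕ) (ω : ℕ → X), (n : ℕ∞) < S ω → τ n ω = n := by
    intro n ω h
    show (min (n : ℕ∞) (S ω)).toNat = n
    rw [min_eq_left h.le, ENat.toNat_coe]
  have hτ_ltS : ∀ (n : ℕ) (ω : ℕ → X), ¬ (n : ℕ∞) < S ω → τ n ω = (S ω).toNat ∧ τ (n+1) ω = τ n ω := by
    intro n ω h
    rw [not_lt] at h
    have h1 : τ n ω = (S ω).toNat := by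
      show (min (n : ℕ∞) (S ω)).toNat = _
      rw [min_eq_right h]
    have h2 : τ (n+1) ω = (S ω).toNat := by
      show (min ((n+1 : ℕ) : ℕ∞) (S ω)).toNat = _
      rw [min_eq_right (h.trans (by exact_mod_cast Nat.le_succ n))]
    exact ⟨h1, h2.trans h1.symm⟩
  have hτ_succ_gt : ∀ (n : ℕ) (ω : ℕ → X), (n : ℕ∞) < S ω → τ (n+1) ω = n + 1 := by
    intro n ω h
    have h' : ((n+1 : ℕ) : ℕ∞) ≤ S ω := by
      have := Order.add_one_le_of_lt h
      exact_mod_cast this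
    show (min ((n+1 : ℕ) : ℕ∞) (S ω)).toNat = n + 1
    rw [min_eq_left h', ENat.toNat_coe]
  have hSmeas : Measurable S := by
    apply measurable_to_countable'
    intro k
    cases k with
    | top => exact hStop
    | coe k =>
        have heq : {ω | S ω = (k : ℕ∞)} =
            {ω | S ω ≤ (k : ℕ∞)} \ ⋃ (m : ℕ) (_ : m < k), {ω | S ω ≤ (m : ℕ∞)} := by
          ext ω
          simp only [Set.mem_setOf_eq, Set.mem_diff, Set.mem_iUnion, not_exists]
          constructor
          · intro h
            refine ⟨le_of_eq h, fun m hm hle => ?_⟩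
            rw [h] at hle
            exact absurd (by exact_mod_cast hle) (not_le.mpr hm)
          · rintro ⟨h1, h2⟩
            cases hS' : S ω with
            | top => rw [hS'] at h1; exact absurd h1 (by simp)
            | coe j =>
                have hj : j ≤ k := by
                  rw [hS'] at h1
                  exact_mod_cast h1
                rcases lt_or_eq_of_le hj with hlt | heq'
                · exact absurd (le_of_eq hS') (h2 j hlt)
                · exact_mod_cast heq'
        rw [show S ⁻¹' {(k : ℕ∞)} = {ω | S ω = (k : ℕ∞)} from rfl, heq]
        exact (hSle k).diff
          (MeasurableSet.iUnion fun m => MeasurableSet.iUnion fun _ => hSle m)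
  have hτmeas : ∀ n, Measurable (τ n) := by
    intro n
    exact (measurable_of_countable (fun a : ℕ∞ => (min (n : ℕ∞) a).toNat)).comp hSmeas
  -- measurability of the stopped statistic
  have hFmeas : ∀ n, Measurable fun ω => ENNReal.ofReal (R (τ n ω) ω) := by
    intro n
    have hrw : (fun ω => ENNReal.ofReal (R (τ n ω) ω))
        = fun ω => ∑ k ∈ Finset.range (n+1),
            if τ n ω = k then ENNReal.ofReal (R k ω) else 0 := by
      funext ω
      rw [Finset.sum_ite_eq (Finset.range (n+1)) (τ n ω)
        (fun k => ENNReal.ofReal (R k ω))]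
      rw [if_pos (Finset.mem_range.mpr (Nat.lt_succ_of_le (hτ_le n ω)))]
    rw [hrw]
    apply Finset.measurable_sum
    intro k _
    exact Measurable.ite ((hτmeas n) (measurableSet_singleton k))
      (ENNReal.measurable_ofReal.comp (hRmeas k)) measurable_const
  -- a.e. recursion for the SR statistic in ℝ≥0∞
  have hBad : ∀ n : ℕ, ∀ᵐ ω ∂Q, g (ω n) / f (ω n) ≠ ⊤ := by
    intro n
    have hBmeas : MeasurableSet {x : X | g x / f x = ⊤} :=
      (hmodel.meas_g.div hmodel.meas_f) (measurableSet_singleton ⊤)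
    have hνB : (μ.withDensity f) {x | g x / f x = ⊤} = 0 := by
      rw [withDensity_apply _ hBmeas]
      have h0 : ∫⁻ x in {x : X | g x / f x = ⊤}, f x ∂μ
          = ∫⁻ x in {x : X | g x / f x = ⊤}, 0 ∂μ := by
        apply setLIntegral_congr_fun_ae hBmeas
        have hgt : ∀ᵐ x ∂μ, g x ≠ ⊤ :=
          (ae_lt_top hmodel.meas_g
            (by rw [hmodel.prob_g]; exact ENNReal.one_ne_top)).mono fun x h => h.ne
        filter_upwards [hgt] with x hx hxB
        rcases ENNReal.div_eq_top.mp hxB with ⟨_, hf0⟩ | ⟨hgtop, _⟩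
        · exact hf0
        · exact absurd hgtop hx
      rw [h0, lintegral_zero]
    have hQB : Q {ω | g (ω n) / f (ω n) = ⊤} = 0 := by
      have hset : {ω : ℕ → X | g (ω n) / f (ω n) = ⊤}
          = (fun ω (i : Fin (n+1)) => ω i) ⁻¹'
            ((fun x : Fin (n+1) → X => x (Fin.last n)) ⁻¹' {x : X | g x / f x = ⊤}) := by
        ext ω
        simp [Fin.last]
      rw [hset, ← Measure.map_apply (hproj (n+1))
        ((measurable_pi_apply (Fin.last n)) hBmeas), hfin (n+1)]
      exact Measure.pi_eval_preimage_null _ hνB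
    rw [ae_iff]
    simpa using hQB
  have hrec : ∀ n : ℕ, ∀ᵐ ω ∂Q,
      ENNReal.ofReal (R (n+1) ω)
        = (1 + ENNReal.ofReal (R n ω)) * (g (ω n) / f (ω n)) := by
    intro n
    filter_upwards [hBad n] with ω hω
    have h1 : R (n+1) ω = (1 + R n ω) * lrv f g (ω n) := rfl
    have hnn : (0:ℝ) ≤ R n ω := SRstat_nonneg f g n ω
    rw [h1, ENNReal.ofReal_mul (by linarith),
      ENNReal.ofReal_add zero_le_one hnn, ENNReal.ofReal_one]
    rw [show lrv f g (ω n) = (g (ω n) / f (ω n)).toReal from rfl,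
      ENNReal.ofReal_toReal hω]
  -- the key martingale identity for the stopped process
  have key : ∀ n : ℕ,
      ∫⁻ ω, ENNReal.ofReal (R (τ n ω) ω) ∂Q = ∫⁻ ω, ((τ n ω : ℕ) : ℝ≥0∞) ∂Q := by
    intro n
    induction n with
    | zero =>
        have h1 : ∀ ω, τ 0 ω = 0 := fun ω => Nat.le_zero.mp (hτ_le 0 ω)
        simp only [h1]
        simp [hRdef, SRstat]
    | succ n ih =>
        set s : Set (ℕ → X) := {ω | (n : ℕ∞) < S ω} with hsdef
        have hsm : MeasurableSet s := hSgt n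
        -- the H function for the step lemma
        set H : (Fin n → X) → ℝ≥0∞ := fun y =>
          if (n : ℕ∞) < S (ext n y) then 1 + ENNReal.ofReal (R n (ext n y)) else 0
          with hHdef
        have hHmeas : Measurable H := by
          apply Measurable.ite
          · exact (hext_meas n) (hSgt n)
          · exact measurable_const.add
              (ENNReal.measurable_ofReal.comp ((hRmeas n).comp (hext_meas n)))
          · exact measurable_const
        have hHproj : ∀ ω, H (fun i : Fin n => ω i)
            = if (n : ℕ∞) < S ω then 1 + ENNReal.ofReal (R n ω) else 0 := by
          intro ω
          have hag : ∀ i < n, ext n (fun j : Fin n => ω j) i = ω i := hext_agree n ω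
          rw [hHdef]
          simp only []
          by_cases h : (n : ℕ∞) < S ω
          · rw [if_pos ((hScongr n _ _ hag).mpr h), if_pos h,
              hRcongr n _ _ hag]
          · rw [if_neg fun hc => h ((hScongr n _ _ hag).mp hc), if_neg h]
        -- apply the step lemma
        have hstep := lr_step hmodel hfin n H hHmeas
        -- compute both sides of hstep as set-integrals
        have hstepL : ∫⁻ ω, H (fun i : Fin n => ω i) * (g (ω n) / f (ω n)) ∂Q
            = ∫⁻ ω in s, (1 + ENNReal.ofReal (R n ω)) * (g (ω n) / f (ω n)) ∂Q := by
          rw [← lintegral_indicator hsm]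
          apply lintegral_congr
          intro ω
          rw [hHproj ω]
          by_cases h : (n : ℕ∞) < S ω
          · rw [if_pos h, Set.indicator_of_mem (show ω ∈ s from h)]
          · rw [if_neg h, Set.indicator_of_notMem (show ω ∉ s from h), zero_mul]
        have hstepR : ∫⁻ ω, H (fun i : Fin n => ω i) ∂Q
            = ∫⁻ ω in s, (1 + ENNReal.ofReal (R n ω)) ∂Q := by
          rw [← lintegral_indicator hsm]
          apply lintegral_congr
          intro ω
          rw [hHproj ω]
          by_cases h : (n : ℕ∞) < S ω
          · rw [if_pos h, Set.indicator_of_mem (show ω ∈ s from h)]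
          · rw [if_neg h, Set.indicator_of_notMem (show ω ∉ s from h)]
        -- split the integral of the stopped statistic
        have hsplit1 : ∫⁻ ω, ENNReal.ofReal (R (τ (n+1) ω) ω) ∂Q
            = ∫⁻ ω in s, ENNReal.ofReal (R (n+1) ω) ∂Q
              + ∫⁻ ω in sᶜ, ENNReal.ofReal (R (τ n ω) ω) ∂Q := by
          rw [← lintegral_add_compl (fun ω => ENNReal.ofReal (R (τ (n+1) ω) ω)) hsm]
          congr 1
          · apply setLIntegral_congr_fun_ae hsm
            filter_upwards with ω hω
            rw [hτ_succ_gt n ω hω]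
          · apply setLIntegral_congr_fun_ae hsm.compl
            filter_upwards with ω hω
            rw [(hτ_ltS n ω hω).2]
        -- on s the stopped statistic at time n is R n
        have hons : ∫⁻ ω in s, ENNReal.ofReal (R (τ n ω) ω) ∂Q
            = ∫⁻ ω in s, ENNReal.ofReal (R n ω) ∂Q := by
          apply setLIntegral_congr_fun_ae hsm
          filter_upwards with ω hω
          rw [hτ_gt n ω hω]
        -- a.e. recursion restricted to s
        have hrecs : ∫⁻ ω in s, ENNReal.ofReal (R (n+1) ω) ∂Q
            = ∫⁻ ω in s, (1 + ENNReal.ofReal (R n ω)) * (g (ω n) / f (ω n)) ∂Q := by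
          apply lintegral_congr_ae
          exact ae_restrict_of_ae ((hrec n).mono fun ω h => h)
        have h1p : ∫⁻ ω in s, (1 + ENNReal.ofReal (R n ω)) ∂Q
            = Q s + ∫⁻ ω in s, ENNReal.ofReal (R n ω) ∂Q := by
          rw [lintegral_add_left measurable_const, setLIntegral_const, one_mul]
        -- integral of τ (n+1)
        have hτint : ∫⁻ ω, ((τ (n+1) ω : ℕ) : ℝ≥0∞) ∂Q
            = Q s + ∫⁻ ω, ((τ n ω : ℕ) : ℝ≥0∞) ∂Q := by
          have hpt : (fun ω => ((τ (n+1) ω : ℕ) : ℝ≥0∞))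
              = fun ω => s.indicator (1 : (ℕ → X) → ℝ≥0∞) ω + ((τ n ω : ℕ) : ℝ≥0∞) := by
            funext ω
            by_cases h : (n : ℕ∞) < S ω
            · rw [Set.indicator_of_mem (show ω ∈ s from h), Pi.one_apply,
                hτ_succ_gt n ω h, hτ_gt n ω h]
              push_cast
              ring
            · rw [Set.indicator_of_notMem (show ω ∉ s from h), (hτ_ltS n ω h).2, zero_add]
          rw [hpt, lintegral_add_left (measurable_one.indicator hsm),
            lintegral_indicator_one hsm]
        -- put everything together
        calc ∫⁻ ω, ENNReal.ofReal (R (τ (n+1) ω) ω) ∂Q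
            = ∫⁻ ω in s, ENNReal.ofReal (R (n+1) ω) ∂Q
              + ∫⁻ ω in sᶜ, ENNReal.ofReal (R (τ n ω) ω) ∂Q := hsplit1
          _ = Q s + ∫⁻ ω in s, ENNReal.ofReal (R n ω) ∂Q
              + ∫⁻ ω in sᶜ, ENNReal.ofReal (R (τ n ω) ω) ∂Q := by
              rw [hrecs, ← hstepL, hstep, hstepR, h1p]
          _ = Q s + (∫⁻ ω in s, ENNReal.ofReal (R (τ n ω) ω) ∂Q
              + ∫⁻ ω in sᶜ, ENNReal.ofReal (R (τ n ω) ω) ∂Q) := by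
              rw [hons, add_assoc]
          _ = Q s + ∫⁻ ω, ENNReal.ofReal (R (τ n ω) ω) ∂Q := by
              rw [lintegral_add_compl _ hsm]
          _ = Q s + ∫⁻ ω, ((τ n ω : ℕ) : ℝ≥0∞) ∂Q := by rw [ih]
          _ = ∫⁻ ω, ((τ (n+1) ω : ℕ) : ℝ≥0∞) ∂Q := hτint.symm
  -- lower bound: A · Q{S ≤ n} ≤ ∫ τ n
  have hlow : ∀ n : ℕ, ENNReal.ofReal A * Q {ω | S ω ≤ (n : ℕ∞)}
      ≤ ARL P (hitTime (SRstat f g 0) A) := by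
    intro n
    have h1 : ∫⁻ ω, ((τ n ω : ℕ) : ℝ≥0∞) ∂Q ≤ ARL P (hitTime (SRstat f g 0) A) := by
      apply lintegral_mono
      intro ω
      have h2 : ((τ n ω : ℕ) : ℕ∞) ≤ S ω :=
        le_trans (ENat.coe_toNat_le_self _) (min_le_right _ _)
      calc ((τ n ω : ℕ) : ℝ≥0∞) = (((τ n ω : ℕ) : ℕ∞) : ℝ≥0∞) := by simp
        _ ≤ ((S ω : ℕ∞) : ℝ≥0∞) := by exact_mod_cast h2
    have h2 : ENNReal.ofReal A * Q {ω | S ω ≤ (n : ℕ∞)}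
        ≤ ∫⁻ ω, ENNReal.ofReal (R (τ n ω) ω) ∂Q := by
      calc ENNReal.ofReal A * Q {ω | S ω ≤ (n : ℕ∞)}
          = ∫⁻ _ in {ω | S ω ≤ (n : ℕ∞)}, ENNReal.ofReal A ∂Q := by
            rw [setLIntegral_const]
        _ ≤ ∫⁻ ω in {ω | S ω ≤ (n : ℕ∞)}, ENNReal.ofReal (R (τ n ω) ω) ∂Q := by
            apply setLIntegral_mono (hFmeas n)
            intro ω hω
            have hω' : S ω ≤ (n : ℕ∞) := hω
            have hτeq : τ n ω = (S ω).toNat := by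
              show (min (n : ℕ∞) (S ω)).toNat = _
              rw [min_eq_right hω']
            have := (hitTime_spec (R := R) (A := A) (ω := ω) (n := n) hω').2
            rw [hτeq]
            exact ENNReal.ofReal_le_ofReal this
        _ ≤ ∫⁻ ω, ENNReal.ofReal (R (τ n ω) ω) ∂Q :=
            setLIntegral_le_lintegral _ _
    calc ENNReal.ofReal A * Q {ω | S ω ≤ (n : ℕ∞)}
        ≤ ∫⁻ ω, ENNReal.ofReal (R (τ n ω) ω) ∂Q := h2
      _ = ∫⁻ ω, ((τ n ω : ℕ) : ℝ≥0∞) ∂Q := key n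
      _ ≤ ARL P (hitTime (SRstat f g 0) A) := h1
  -- conclude
  by_cases htop : Q {ω | S ω = ⊤} = 0
  · have hunion : {ω | S ω ≠ ⊤} = ⋃ n : ℕ, {ω | S ω ≤ (n : ℕ∞)} := by
      ext ω
      simp only [Set.mem_setOf_eq, Set.mem_iUnion]
      constructor
      · intro h
        obtain ⟨k, hk⟩ := WithTop.ne_top_iff_exists.mp h
        exact ⟨k, le_of_eq hk.symm⟩
      · rintro ⟨n, hn⟩
        exact ne_top_of_le_ne_top (ENat.coe_ne_top n) hn
    have hone : Q {ω | S ω ≠ ⊤} = 1 := by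
      have hc : {ω | S ω ≠ ⊤} = {ω | S ω = ⊤}ᶜ := rfl
      rw [hc, measure_compl hStop (measure_ne_top Q _), htop, measure_univ, tsub_zero]
    have hdir : Directed (· ⊆ ·) (fun n : ℕ => {ω | S ω ≤ (n : ℕ∞)}) := by
      apply Monotone.directed_le
      intro a b hab ω hω
      exact le_trans (show S ω ≤ (a : ℕ∞) from hω)
        (show (a : ℕ∞) ≤ (b : ℕ∞) by exact_mod_cast hab)
    have hsup : ENNReal.ofReal A * Q {ω | S ω ≠ ⊤}
        ≤ ARL P (hitTime (SRstat f g 0) A) := by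
      rw [hunion, Directed.measure_iUnion hdir, ENNReal.mul_iSup]
      exact iSup_le fun n => hlow n
    rw [hone, mul_one] at hsup
    exact hsup
  · have hinf : (⊤ : ℝ≥0∞) ≤ ARL P (hitTime (SRstat f g 0) A) := by
      have h1 : ∫⁻ _ in {ω | S ω = ⊤}, (⊤ : ℝ≥0∞) ∂Q
          ≤ ARL P (hitTime (SRstat f g 0) A) := by
        calc ∫⁻ _ in {ω | S ω = ⊤}, (⊤ : ℝ≥0∞) ∂Q
            = ∫⁻ ω in {ω | S ω = ⊤}, ((S ω : ℕ∞) : ℝ≥0∞) ∂Q := by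
              apply setLIntegral_congr_fun_ae hStop
              filter_upwards with ω hω
              have hω' : S ω = ⊤ := hω
              rw [hω']
              simp
          _ ≤ ∫⁻ ω, ((S ω : ℕ∞) : ℝ≥0∞) ∂Q := setLIntegral_le_lintegral _ _
      rw [setLIntegral_const, ENNReal.top_mul htop] at h1
      exact h1
    exact le_top.trans hinf
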